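/- Let X be a complex Hilbert space, let M₁, …, M_N (N ≥ 2) be closed subspaces of X, let P_k denote the orthogonal projection of X onto M_k, let M = M₁ ∩ … ∩ M_N with orthogonal projection P_M, and let T = P_N ⋯ P₁. Let c be a real number with 0 ≤ c ≤ 1 such that for all vectors m₁ ∈ M₁ ∩ M^⊥, …, m_N ∈ M_N ∩ M^⊥ with ∑_{k=1}^N ‖m_k‖² = 1 one has ∑_{j ≠ k} Re⟨m_j, m_k⟩ ≤ (N − 1)c. Then for every x ∈ X and every n ≥ 0, ‖T^n x − P_M x‖ ≤ (1 − 3(N−1)(1−c)/N³)^{n/2} · ‖x − P_M x‖. -/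

import Mathlib

/-!
For `z ⊥ M` put `y_k = P_k ⋯ P_1 z`. Pythagoras telescopes to `‖z‖² - ‖Tz‖² = D`, where
`D = ∑ ‖y_{k-1} - y_k‖²`, and by Cauchy–Schwarz any two `y_j, y_k` are within `√(N D)` of each
other. As the norms `‖y_k‖` decrease, this gives `Re⟨y_j, y_k⟩ ≥ ‖Tz‖² - N D / 2` for `j ≠ k`, and
the Friedrichs inequality applied to `m_k = y_k ∈ M_k ∩ M^⊥` turns this into
`‖Tz‖² - N D / 2 ≤ c ‖z‖²`, i.e. `‖Tz‖² ≤ (1 - 2 (1 - c) / (N + 2)) ‖z‖²`. Since `T` fixes `M` and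
maps `M^⊥` into itself, iterating on `x - P_M x` gives the rate.
-/

open Filter Topology

/-- The orthogonal projection onto a subspace, as an endomorphism. -/
noncomputable def projOnto {X : Type*} [NormedAddCommGroup X] [InnerProductSpace ℂ X]
    (K : Submodule ℂ X) [K.HasOrthogonalProjection] : X →L[ℂ] X :=
  K.subtypeL.comp K.orthogonalProjection

/-- The product `P_k ⋯ P_1` of the orthogonal projections onto the first `k` of the
subspaces `M 0, …, M (N-1)` (applied in order: first `P_1 = projOnto (M 0)`, etc.);
for `k = N` this is the operator `T = P_N ⋯ P_1` of the method of cyclic alternating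
projections. -/
noncomputable def cycleProd {X : Type*} [NormedAddCommGroup X] [InnerProductSpace ℂ X]
    {N : ℕ} (M : Fin N → Submodule ℂ X) [∀ i, CompleteSpace (M i)] (k : ℕ) :
    X →L[ℂ] X :=
  (((List.ofFn fun i => projOnto (M i)).take k).reverse).prod

section InnerProduct

variable {𝕜 E : Type*} [RCLike 𝕜] [NormedAddCommGroup E] [InnerProductSpace 𝕜 E]

open scoped InnerProductSpace

theorem Submodule.starProjection_mem_orthogonal_of_le {K W : Submodule 𝕜 E}
    [K.HasOrthogonalProjection] (hWK : W ≤ K) {z : E} (hz : z ∈ Wᗮ) :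
    K.starProjection z ∈ Wᗮ := by
  rw [Submodule.mem_orthogonal]
  intro w hw
  rw [← Submodule.inner_starProjection_left_eq_right, (K.starProjection_eq_self_iff).2 (hWK hw)]
  exact (Submodule.mem_orthogonal W z).1 hz w hw

theorem sub_div_two_le_re_inner {a b : E} {s t : ℝ} (ha : s ≤ ‖a‖ ^ 2) (hb : s ≤ ‖b‖ ^ 2)
    (hab : ‖a - b‖ ^ 2 ≤ t) : s - t / 2 ≤ RCLike.re ⟪a, b⟫_𝕜 := by
  have := norm_sub_sq (𝕜 := 𝕜) a b
  linarith

end InnerProduct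

theorem norm_sub_sq_le_mul_sum_norm_sub_succ_sq {E : Type*} [SeminormedAddCommGroup E]
    (f : ℕ → E) {n j k : ℕ} (hj : j ≤ n) (hk : k ≤ n) :
    ‖f j - f k‖ ^ 2 ≤ n * ∑ i ∈ Finset.range n, ‖f i - f (i + 1)‖ ^ 2 := by
  wlog hjk : j ≤ k generalizing j k
  · rw [norm_sub_rev]; exact this hk hj (le_of_not_ge hjk)
  have hsum : ‖f j - f k‖ ≤ ∑ i ∈ Finset.range n, ‖f i - f (i + 1)‖ := by
    simp only [← dist_eq_norm]
    refine (dist_le_Ico_sum_dist f hjk).trans (Finset.sum_le_sum_of_subset_of_nonneg ?_ ?_)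
    · intro i hi
      simp only [Finset.mem_Ico, Finset.mem_range] at hi ⊢
      omega
    · exact fun _ _ _ => dist_nonneg
  calc ‖f j - f k‖ ^ 2 ≤ (∑ i ∈ Finset.range n, ‖f i - f (i + 1)‖) ^ 2 :=
        pow_le_pow_left₀ (norm_nonneg _) hsum 2
    _ ≤ n * ∑ i ∈ Finset.range n, ‖f i - f (i + 1)‖ ^ 2 := by
        simpa using
          sq_sum_le_card_mul_sum_sq (s := Finset.range n) (f := fun i => ‖f i - f (i + 1)‖)

theorem card_mul_card_sub_one_mul_le_sum_ite_ne {ι : Type*} [Fintype ι] [DecidableEq ι]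
    {f : ι → ι → ℝ} {b : ℝ} (h : ∀ j k, j ≠ k → b ≤ f j k) :
    (Fintype.card ι : ℝ) * (Fintype.card ι - 1) * b ≤ ∑ j, ∑ k, if j ≠ k then f j k else 0 := by
  calc (Fintype.card ι : ℝ) * (Fintype.card ι - 1) * b
      = ∑ j : ι, ∑ k : ι, if j ≠ k then b else 0 := by
        have hrow : ∀ j : ι, (∑ k : ι, if j ≠ k then b else 0) = (Fintype.card ι - 1) * b := by
          intro j
          rw [Finset.sum_ite, Finset.sum_const_zero, add_zero, Finset.sum_const, Finset.filter_ne,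
            Finset.card_erase_of_mem (Finset.mem_univ j), nsmul_eq_mul,
            Nat.cast_pred (Finset.card_pos.2 ⟨j, Finset.mem_univ j⟩), Finset.card_univ]
        simp only [hrow, Finset.sum_const, Finset.card_univ, nsmul_eq_mul]
        ring
    _ ≤ _ := Finset.sum_le_sum fun j _ => Finset.sum_le_sum fun k _ => by
        split_ifs with hjk
        · exact h j k hjk
        · rfl

theorem norm_iterate_le_of_mapsTo {E : Type*} [SeminormedAddCommGroup E] {f : E → E}
    {V : Set E} (hV : Set.MapsTo f V V) {q : ℝ} (hq : 0 ≤ q) (hf : ∀ z ∈ V, ‖f z‖ ≤ q * ‖z‖)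
    (n : ℕ) {z : E} (hz : z ∈ V) : ‖f^[n] z‖ ≤ q ^ n * ‖z‖ := by
  induction n generalizing z with
  | zero => simp
  | succ n ih =>
    calc ‖f^[n + 1] z‖ = ‖f^[n] (f z)‖ := by rw [Function.iterate_succ_apply]
      _ ≤ q ^ n * ‖f z‖ := ih (hV hz)
      _ ≤ q ^ n * (q * ‖z‖) := by gcongr; exact hf z hz
      _ = q ^ (n + 1) * ‖z‖ := by ring

section OffDiagonal

variable {X : Type*} [NormedAddCommGroup X] [InnerProductSpace ℂ X] {ι : Type*} [Fintype ι]
  [DecidableEq ι]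

noncomputable def offDiagReInnerSum (m : ι → X) : ℝ :=
  ∑ j, ∑ k, if j ≠ k then (inner ℂ (m j) (m k) : ℂ).re else 0

theorem offDiagReInnerSum_smul (t : ℂ) (m : ι → X) :
    offDiagReInnerSum (t • m) = ‖t‖ ^ 2 * offDiagReInnerSum m := by
  have hinner : ∀ j k, (inner ℂ (t • m j) (t • m k) : ℂ) = (‖t‖ ^ 2 : ℝ) * inner ℂ (m j) (m k) := by
    intro j k
    rw [inner_smul_left, inner_smul_right, ← mul_assoc, RCLike.conj_mul]
    norm_cast
  simp only [offDiagReInnerSum, Pi.smul_apply, hinner, Complex.re_ofReal_mul, Finset.mul_sum,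
    mul_ite, mul_zero]

theorem offDiagReInnerSum_le_mul_sum_norm_sq {V : ι → Submodule ℂ X} {a : ℝ}
    (h : ∀ m : ι → X, (∀ k, m k ∈ V k) → ∑ k, ‖m k‖ ^ 2 = 1 → offDiagReInnerSum m ≤ a)
    {m : ι → X} (hm : ∀ k, m k ∈ V k) : offDiagReInnerSum m ≤ a * ∑ k, ‖m k‖ ^ 2 := by
  set S := ∑ k, ‖m k‖ ^ 2
  rcases (Finset.sum_nonneg fun k _ => sq_nonneg ‖m k‖ : 0 ≤ S).eq_or_lt with hS | hS
  · have hm0 : m = 0 := funext fun k => by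
      simpa using (Finset.sum_eq_zero_iff_of_nonneg fun k _ => sq_nonneg ‖m k‖).1 hS.symm k
        (Finset.mem_univ k)
    simp [hm0, offDiagReInnerSum, S]
  set t : ℂ := (((√S)⁻¹ : ℝ) : ℂ)
  have ht : ‖t‖ ^ 2 = S⁻¹ := by
    rw [Complex.norm_real, Real.norm_eq_abs, sq_abs, inv_pow, Real.sq_sqrt hS.le]
  have hunit : ∑ k, ‖(t • m) k‖ ^ 2 = 1 := by
    simp only [Pi.smul_apply, norm_smul, mul_pow, ← Finset.mul_sum, ht]
    exact inv_mul_cancel₀ hS.ne'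
  have := h (t • m) (fun k => (V k).smul_mem t (hm k)) hunit
  rw [offDiagReInnerSum_smul, ht, inv_mul_le_iff₀ hS] at this
  linarith

end OffDiagonal

section CycleProd

variable {X : Type*} [NormedAddCommGroup X] [InnerProductSpace ℂ X] {N : ℕ}
  (M : Fin N → Submodule ℂ X) [∀ i, CompleteSpace (M i)]

theorem projOnto_eq_starProjection (K : Submodule ℂ X) [K.HasOrthogonalProjection] :
    projOnto K = K.starProjection :=
  rfl

theorem cycleProd_zero : cycleProd M 0 = 1 := by
  simp [cycleProd]

theorem cycleProd_succ {k : ℕ} (hk : k < N) :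
    cycleProd M (k + 1) = (M ⟨k, hk⟩).starProjection * cycleProd M k := by
  rw [cycleProd, cycleProd, List.take_add_one, List.getElem?_eq_getElem (by simpa using hk)]
  simp [projOnto_eq_starProjection]

theorem cycleProd_apply_induction {p : X → Prop} {z : X} (hz : p z)
    (hstep : ∀ i x, p x → p ((M i).starProjection x)) {k : ℕ} (hk : k ≤ N) :
    p (cycleProd M k z) := by
  induction k with
  | zero => simpa [cycleProd_zero] using hz
  | succ k ih =>
    rw [cycleProd_succ M hk, mul_apply_eq_comp]
    exact hstep _ _ (ih (Nat.le_of_succ_le hk))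

theorem cycleProd_apply_of_forall_mem {y : X} (hy : ∀ i, y ∈ M i) {k : ℕ} (hk : k ≤ N) :
    cycleProd M k y = y :=
  cycleProd_apply_induction M (p := (· = y)) rfl
    (fun i x hx => by rw [hx]; exact (M i).starProjection_eq_self_iff.2 (hy i)) hk

theorem cycleProd_apply_mem_orthogonal {z : X} (hz : z ∈ (⨅ i, M i)ᗮ) {k : ℕ} (hk : k ≤ N) :
    cycleProd M k z ∈ (⨅ i, M i)ᗮ :=
  cycleProd_apply_induction M hz
    (fun i _ hx => Submodule.starProjection_mem_orthogonal_of_le (iInf_le _ i) hx) hk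

theorem cycleProd_succ_apply_mem (z : X) (i : Fin N) : cycleProd M (i + 1) z ∈ M i := by
  rw [cycleProd_succ M i.isLt, mul_apply_eq_comp]
  exact (M i).starProjection_apply_mem _

theorem norm_sq_cycleProd_eq_add_sum_Ico (z : X) {j k : ℕ} (hjk : j ≤ k) (hk : k ≤ N) :
    ‖cycleProd M j z‖ ^ 2 = ‖cycleProd M k z‖ ^ 2 +
      ∑ i ∈ Finset.Ico j k, ‖cycleProd M i z - cycleProd M (i + 1) z‖ ^ 2 := by
  induction k, hjk using Nat.le_induction with
  | base => simp
  | succ k hjk ih =>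
    have hpyth := (M ⟨k, hk⟩).norm_sq_eq_add_norm_sq_starProjection (cycleProd M k z)
    rw [Submodule.starProjection_orthogonal_val, ← mul_apply_eq_comp, ← cycleProd_succ M hk]
      at hpyth
    rw [ih (Nat.le_of_succ_le hk), Finset.sum_Ico_succ_top hjk, hpyth]
    ring

end CycleProd

section Rate

variable {X : Type*} [NormedAddCommGroup X] [InnerProductSpace ℂ X] {N : ℕ}
  (M : Fin N → Submodule ℂ X) [∀ i, CompleteSpace (M i)]

theorem norm_sq_cycleProd_le_of_le (z : X) {j k : ℕ} (hjk : j ≤ k) (hk : k ≤ N) :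
    ‖cycleProd M k z‖ ^ 2 ≤ ‖cycleProd M j z‖ ^ 2 := by
  rw [norm_sq_cycleProd_eq_add_sum_Ico M z hjk hk]
  exact le_add_of_nonneg_right (Finset.sum_nonneg fun _ _ => sq_nonneg _)

theorem one_sub_mul_norm_sq_le_of_offDiagReInnerSum_le (hN : 2 ≤ N) {c : ℝ} (hc0 : 0 ≤ c)
    (hc : ∀ m : Fin N → X, (∀ k, m k ∈ M k ⊓ (⨅ i, M i)ᗮ) →
      offDiagReInnerSum m ≤ (N - 1) * c * ∑ k, ‖m k‖ ^ 2)
    {z : X} (hz : z ∈ (⨅ i, M i)ᗮ) :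
    (1 - c) * ‖z‖ ^ 2 ≤ (N + 2) / 2 * (‖z‖ ^ 2 - ‖cycleProd M N z‖ ^ 2) := by
  set y : ℕ → X := fun k => cycleProd M k z
  set D := ∑ i ∈ Finset.range N, ‖y i - y (i + 1)‖ ^ 2
  have hD : ‖z‖ ^ 2 = ‖y N‖ ^ 2 + D := by
    simpa only [cycleProd_zero, one_apply_eq_self, ← Finset.range_eq_Ico] using
      norm_sq_cycleProd_eq_add_sum_Ico M z (Nat.zero_le N) le_rfl
  set m : Fin N → X := fun k => y (k + 1)
  have hcross : (N : ℝ) * (N - 1) * (‖y N‖ ^ 2 - N * D / 2) ≤ offDiagReInnerSum m := by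
    have h := card_mul_card_sub_one_mul_le_sum_ite_ne
      (f := fun j k => (inner ℂ (m j) (m k) : ℂ).re) fun j k _ =>
        sub_div_two_le_re_inner (𝕜 := ℂ) (norm_sq_cycleProd_le_of_le M z j.isLt le_rfl)
          (norm_sq_cycleProd_le_of_le M z k.isLt le_rfl)
          (norm_sub_sq_le_mul_sum_norm_sub_succ_sq y j.isLt k.isLt)
    rwa [Fintype.card_fin] at h
  have hm : ∑ k, ‖m k‖ ^ 2 ≤ N * ‖z‖ ^ 2 := by
    calc ∑ k, ‖m k‖ ^ 2 ≤ ∑ _k : Fin N, ‖z‖ ^ 2 := Finset.sum_le_sum fun k _ =>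
          (norm_sq_cycleProd_le_of_le M z (Nat.zero_le _) k.isLt).trans_eq
            (by rw [cycleProd_zero, one_apply_eq_self])
      _ = N * ‖z‖ ^ 2 := by simp
  have hfried := hc m fun k =>
    ⟨cycleProd_succ_apply_mem M z k, cycleProd_apply_mem_orthogonal M hz k.isLt⟩
  have hN2 : (2 : ℝ) ≤ N := by exact_mod_cast hN
  have hN' : (0 : ℝ) < N * (N - 1) := by nlinarith
  have hyN : ‖y N‖ ^ 2 - N * D / 2 ≤ c * ‖z‖ ^ 2 := by
    refine le_of_mul_le_mul_left ?_ hN'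
    calc (N : ℝ) * (N - 1) * (‖y N‖ ^ 2 - N * D / 2) ≤ (N - 1) * c * (N * ‖z‖ ^ 2) :=
          hcross.trans (hfried.trans (mul_le_mul_of_nonneg_left hm
            (mul_nonneg (by linarith) hc0)))
      _ = N * (N - 1) * (c * ‖z‖ ^ 2) := by ring
  show (1 - c) * ‖z‖ ^ 2 ≤ (N + 2) / 2 * (‖z‖ ^ 2 - ‖y N‖ ^ 2)
  rw [show ‖z‖ ^ 2 - ‖y N‖ ^ 2 = D by linarith]
  linarith

theorem norm_sq_cycleProd_le_of_offDiagReInnerSum_le (hN : 2 ≤ N) {c : ℝ} (hc0 : 0 ≤ c)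
    (hc : ∀ m : Fin N → X, (∀ k, m k ∈ M k ⊓ (⨅ i, M i)ᗮ) →
      offDiagReInnerSum m ≤ (N - 1) * c * ∑ k, ‖m k‖ ^ 2)
    {z : X} (hz : z ∈ (⨅ i, M i)ᗮ) :
    ‖cycleProd M N z‖ ^ 2 ≤ (1 - 3 * ((N : ℝ) - 1) * (1 - c) / (N : ℝ) ^ 3) * ‖z‖ ^ 2 := by
  have hkey := one_sub_mul_norm_sq_le_of_offDiagReInnerSum_le M hN hc0 hc hz
  have hdecr : 0 ≤ ‖z‖ ^ 2 - ‖cycleProd M N z‖ ^ 2 := by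
    simpa [cycleProd_zero] using norm_sq_cycleProd_le_of_le M z (Nat.zero_le N) le_rfl
  have hN2 : (2 : ℝ) ≤ N := by exact_mod_cast hN
  -- the contraction factor `1 - 2 (1 - c) / (N + 2)` is at most the stated one
  have hconst : 3 * ((N : ℝ) - 1) * ((N + 2) / 2) ≤ N ^ 3 := by nlinarith [sq_nonneg ((N : ℝ) - 2)]
  have h3 : 3 * ((N : ℝ) - 1) * (1 - c) * ‖z‖ ^ 2 ≤ N ^ 3 * (‖z‖ ^ 2 - ‖cycleProd M N z‖ ^ 2) :=
    calc 3 * ((N : ℝ) - 1) * (1 - c) * ‖z‖ ^ 2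
        = 3 * ((N : ℝ) - 1) * ((1 - c) * ‖z‖ ^ 2) := by ring
      _ ≤ 3 * ((N : ℝ) - 1) * ((N + 2) / 2 * (‖z‖ ^ 2 - ‖cycleProd M N z‖ ^ 2)) := by
        gcongr; linarith
      _ ≤ N ^ 3 * (‖z‖ ^ 2 - ‖cycleProd M N z‖ ^ 2) := by
        rw [← mul_assoc]; gcongr
  have hN3 : (0 : ℝ) < N ^ 3 := by positivity
  rw [sub_mul, one_mul, le_sub_comm, div_mul_eq_mul_div, div_le_iff₀ hN3]
  linarith

end Rate

theorem alternatingProjections_rate_of_friedrichs_number_general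
    {X : Type*} [NormedAddCommGroup X] [InnerProductSpace ℂ X]
    {N : ℕ} (hN : 2 ≤ N) (M : Fin N → Submodule ℂ X) [∀ i, CompleteSpace (M i)]
    [CompleteSpace (⨅ i, M i : Submodule ℂ X)]
    (c : ℝ) (hc0 : 0 ≤ c)
    (hc : ∀ m : Fin N → X,
      (∀ k, m k ∈ M k ⊓ (⨅ i, M i : Submodule ℂ X)ᗮ) →
      (∑ k : Fin N, ‖m k‖ ^ 2 = 1) →
      (∑ j : Fin N, ∑ k : Fin N, if j ≠ k then (inner ℂ (m j) (m k) : ℂ).re else 0) ≤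
        ((N : ℝ) - 1) * c) :
    ∀ x : X, ∀ n : ℕ,
      ‖((cycleProd M N) ^ n) x - (projOnto (⨅ i, M i)) x‖ ≤
        (1 - 3 * ((N : ℝ) - 1) * (1 - c) / (N : ℝ) ^ 3) ^ ((n : ℝ) / 2) *
          ‖x - (projOnto (⨅ i, M i)) x‖ := by
  intro x n
  set r := 1 - 3 * ((N : ℝ) - 1) * (1 - c) / (N : ℝ) ^ 3
  have hN2 : (2 : ℝ) ≤ N := by exact_mod_cast hN
  have hr : 0 ≤ r := by
    rw [sub_nonneg, div_le_one (by positivity)]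
    nlinarith [sq_nonneg ((N : ℝ) - 2), mul_nonneg (by linarith : (0 : ℝ) ≤ N - 1) hc0]
  have hsqrt : ∀ z ∈ (⨅ i, M i)ᗮ, ‖cycleProd M N z‖ ≤ √r * ‖z‖ := fun z hz => by
    rw [← sq_le_sq₀ (norm_nonneg _) (by positivity), mul_pow, Real.sq_sqrt hr]
    exact norm_sq_cycleProd_le_of_offDiagReInnerSum_le M hN hc0
      (fun m hm => offDiagReInnerSum_le_mul_sum_norm_sq (hc ·) hm) hz
  have hfix : cycleProd M N (projOnto (⨅ i, M i) x) = projOnto (⨅ i, M i) x :=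
    cycleProd_apply_of_forall_mem M
      ((Submodule.mem_iInf _).1 (Submodule.starProjection_apply_mem _ x)) le_rfl
  have hsplit : ((cycleProd M N) ^ n) x - projOnto (⨅ i, M i) x =
      (cycleProd M N)^[n] (x - projOnto (⨅ i, M i) x) := by
    rw [← FunLike.coe_pow_eq_iterate, map_sub, FunLike.coe_pow_eq_iterate,
      Function.iterate_fixed hfix]
  have hpow : √r ^ n = r ^ ((n : ℝ) / 2) := by
    rw [Real.sqrt_eq_rpow, ← Real.rpow_natCast, ← Real.rpow_mul hr, one_div_mul_eq_div]
  rw [hsplit, ← hpow]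
  exact norm_iterate_le_of_mapsTo (fun z hz => cycleProd_apply_mem_orthogonal M hz le_rfl)
    (Real.sqrt_nonneg r) hsqrt n (Submodule.sub_starProjection_mem_orthogonal x)

/-- **Rate of convergence in terms of the Friedrichs number.** If `c ∈ [0,1]` is such
that `∑_{j ≠ k} Re⟨m_j, m_k⟩ ≤ (N-1)c` for all `m_k ∈ M_k ∩ M^⊥` with
`∑ ‖m_k‖² = 1`, then `‖Tⁿx - P_M x‖ ≤ (1 - 3(N-1)(1-c)/N³)^{n/2} ‖x - P_M x‖`. -/
theorem alternatingProjections_rate_of_friedrichs_number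
    {X : Type*} [NormedAddCommGroup X] [InnerProductSpace ℂ X] [CompleteSpace X]
    {N : ℕ} (hN : 2 ≤ N) (M : Fin N → Submodule ℂ X) [∀ i, CompleteSpace (M i)]
    [CompleteSpace (⨅ i, M i : Submodule ℂ X)]
    (c : ℝ) (hc0 : 0 ≤ c) (hc1 : c ≤ 1)
    (hc : ∀ m : Fin N → X,
      (∀ k, m k ∈ M k ⊓ (⨅ i, M i : Submodule ℂ X)ᗮ) →
      (∑ k : Fin N, ‖m k‖ ^ 2 = 1) →
      (∑ j : Fin N, ∑ k : Fin N, if j ≠ k then (inner ℂ (m j) (m k) : ℂ).re else 0) ≤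
        ((N : ℝ) - 1) * c) :
    ∀ x : X, ∀ n : ℕ,
      ‖((cycleProd M N) ^ n) x - (projOnto (⨅ i, M i)) x‖ ≤
        (1 - 3 * ((N : ℝ) - 1) * (1 - c) / (N : ℝ) ^ 3) ^ ((n : ℝ) / 2) *
          ‖x - (projOnto (⨅ i, M i)) x‖ :=
  alternatingProjections_rate_of_friedrichs_number_general hN M c hc0 hc
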